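/- Let g_δ : ℝ → ℝ be defined by g_δ(s) = 0 for s < −δ, g_δ(s) = 1 + s/δ for −δ ≤ s ≤ 0, g_δ(s) = 1 for s > 0. If (X_k) takes values in [−A, A] ⊂ ℝ, 𝓔_n is the empirical measure, and F_μ is the distribution function of μ, then κ(𝓔_n, μ) ≤ δ + ∫_{−A}^{A} |(1/n)∑_{k=1}^{n} g_δ(t − X_k) − F_μ(t)| dt. -/

import Mathlib

open MeasureTheory Finset

/-- Kantorovich distance on probability measures on `ℝ`:
supremum over 1-Lipschitz test functions. -/
noncomputable def kantorovichR (μ₁ μ₂ : Measure ℝ) : ℝ :=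
  ⨆ g : {g : ℝ → ℝ // LipschitzWith 1 g}, (∫ x, g.1 x ∂μ₁) - ∫ x, g.1 x ∂μ₂

/-- The empirical measure of the sample `x 1, …, x n`. -/
noncomputable def empiricalMeasureR (n : ℕ) (x : ℕ → ℝ) : Measure ℝ :=
  ((n : ENNReal))⁻¹ • ∑ j ∈ Finset.Icc 1 n, Measure.dirac (x j)

/-- The piecewise linear approximation `g_δ` of the Heaviside function. -/
noncomputable def gdelta (δ : ℝ) (s : ℝ) : ℝ :=
  if s < -δ then 0 else if s ≤ 0 then 1 + s / δ else 1

lemma measurable_gdelta (δ : ℝ) : Measurable (gdelta δ) := by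
  unfold gdelta
  exact Measurable.ite (measurableSet_lt measurable_id measurable_const) measurable_const
    (Measurable.ite (measurableSet_le measurable_id measurable_const)
      (by fun_prop) measurable_const)

lemma gdelta_nonneg {δ : ℝ} (hδ : 0 < δ) (s : ℝ) : 0 ≤ gdelta δ s := by
  unfold gdelta
  split_ifs with h1 h2
  · exact le_refl _
  · push_neg at h1
    have : -1 ≤ s / δ := by
      rw [le_div_iff₀ hδ]; linarith
    linarith
  · norm_num

lemma gdelta_le_one {δ : ℝ} (hδ : 0 < δ) (s : ℝ) : gdelta δ s ≤ 1 := by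
  unfold gdelta
  split_ifs with h1 h2
  · norm_num
  · have : s / δ ≤ 0 := div_nonpos_of_nonpos_of_nonneg h2 hδ.le
    linarith
  · exact le_refl _

lemma abs_heaviside_sub_gdelta {δ : ℝ} (hδ : 0 < δ) (s : ℝ) :
    |(if 0 < s then (1:ℝ) else 0) - gdelta δ s| ≤
      Set.indicator (Set.Icc (-δ) 0) (fun _ => (1:ℝ)) s := by
  unfold gdelta
  rcases lt_or_ge s (-δ) with h | h
  · rw [if_neg (by linarith), if_pos h, Set.indicator_of_notMem (by simp [Set.mem_Icc]; intro h'; linarith)]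
    simp
  · rw [if_neg (not_lt.2 h)]
    rcases le_or_gt s 0 with h2 | h2
    · rw [if_neg (not_lt.2 h2), if_pos h2, Set.indicator_of_mem (Set.mem_Icc.2 ⟨by linarith, h2⟩)]
      have h3 : -1 ≤ s / δ := by rw [le_div_iff₀ hδ]; linarith
      have h4 : s / δ ≤ 0 := div_nonpos_of_nonpos_of_nonneg h2 hδ.le
      rw [abs_le]; constructor <;> [linarith; linarith]
    · rw [if_pos h2, if_neg (by linarith)]
      simpa using Set.indicator_nonneg (fun _ _ => zero_le_one) s

lemma integrable_dirac' {f : ℝ → ℝ} (hf : StronglyMeasurable f) (a : ℝ) :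
    Integrable f (Measure.dirac a) := by
  refine ⟨hf.aestronglyMeasurable, ?_⟩
  rw [HasFiniteIntegral, lintegral_dirac]
  exact enorm_lt_top

lemma integral_empirical {n : ℕ} (hn : 1 ≤ n) (x : ℕ → ℝ) {f : ℝ → ℝ}
    (hf : StronglyMeasurable f) :
    ∫ y, f y ∂(empiricalMeasureR n x) = (1/(n:ℝ)) * ∑ j ∈ Finset.Icc 1 n, f (x j) := by
  rw [empiricalMeasureR, integral_smul_measure,
    integral_finset_sum_measure (fun i _ => integrable_dirac' hf (x i))]
  simp only [integral_dirac]
  rw [ENNReal.toReal_inv, ENNReal.toReal_natCast, smul_eq_mul, one_div]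

lemma integrable_restrict_of_bounded {S : Set ℝ} (hS : volume S ≠ ⊤) {f : ℝ → ℝ}
    (hm : AEStronglyMeasurable f (volume.restrict S)) {C : ℝ} (hb : ∀ t, |f t| ≤ C) :
    Integrable f (volume.restrict S) := by
  haveI : IsFiniteMeasure (volume.restrict S) :=
    ⟨by rw [Measure.restrict_apply_univ]; exact hS.lt_top⟩
  exact Integrable.mono' (integrable_const C) hm (Filter.Eventually.of_forall hb)

lemma ae_no_atoms (μ : Measure ℝ) [IsProbabilityMeasure μ] : ∀ᵐ t : ℝ ∂volume, μ {t} = 0 := by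
  have hc : Set.Countable {t : ℝ | 0 < μ {t}} := by
    apply MeasureTheory.Measure.countable_meas_pos_of_disjoint_iUnion₀
      (As := fun t : ℝ => {t})
    · exact fun i => (measurableSet_singleton i).nullMeasurableSet
    · exact fun i j hij => (Set.disjoint_singleton.2 hij).aedisjoint
  have hz : volume {t : ℝ | 0 < μ {t}} = 0 := hc.measure_zero _
  rw [ae_iff]
  convert hz using 2
  ext t
  simp [pos_iff_ne_zero]

lemma heaviside_gdelta_integral {A δ : ℝ} (hδ : 0 < δ) (a : ℝ) :
    ∫ t in Set.Ioc (-A) A, |(if a < t then (1:ℝ) else 0) - gdelta δ (t - a)| ≤ δ := by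
  have hpt : ∀ t, |(if a < t then (1:ℝ) else 0) - gdelta δ (t - a)| ≤
      Set.indicator (Set.Icc (a - δ) a) (fun _ => (1:ℝ)) t := by
    intro t
    have h1 := abs_heaviside_sub_gdelta hδ (t - a)
    simp only [sub_pos] at h1
    refine h1.trans (le_of_eq ?_)
    simp only [Set.indicator_apply, Set.mem_Icc]
    have : (-δ ≤ t - a ∧ t - a ≤ 0) ↔ (a - δ ≤ t ∧ t ≤ a) := by
      constructor <;> (intro ⟨u, v⟩; constructor <;> linarith)
    simp [this]
  have hind_int : Integrable (Set.indicator (Set.Icc (a - δ) a) (fun _ => (1:ℝ))) volume := by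
    rw [integrable_indicator_iff measurableSet_Icc]
    refine integrableOn_const ?_
    rw [Real.volume_Icc]; exact ENNReal.ofReal_ne_top
  have step1 : ∫ t in Set.Ioc (-A) A, |(if a < t then (1:ℝ) else 0) - gdelta δ (t - a)| ≤
      ∫ t in Set.Ioc (-A) A, Set.indicator (Set.Icc (a - δ) a) (fun _ => (1:ℝ)) t := by
    refine integral_mono ?_ (hind_int.restrict) hpt
    · refine integrable_restrict_of_bounded (by rw [Real.volume_Ioc]; exact ENNReal.ofReal_ne_top) ?_ (C := 2) ?_
      · refine ((Measurable.ite (measurableSet_lt measurable_const measurable_id) measurable_const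
          measurable_const).sub ((measurable_gdelta δ).comp (measurable_id.sub measurable_const))).abs.aestronglyMeasurable
      · intro t
        rw [abs_abs]
        have g1 := gdelta_nonneg hδ (t - a)
        have g2 := gdelta_le_one hδ (t - a)
        rw [abs_le]; split_ifs <;> constructor <;> linarith
  have step2 : ∫ t in Set.Ioc (-A) A, Set.indicator (Set.Icc (a - δ) a) (fun _ => (1:ℝ)) t ≤
      ∫ t, Set.indicator (Set.Icc (a - δ) a) (fun _ => (1:ℝ)) t := by
    refine integral_mono_measure Measure.restrict_le_self ?_ hind_int
    exact Filter.Eventually.of_forall fun t => Set.indicator_nonneg (fun _ _ => zero_le_one) t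
  have step3 : ∫ t, Set.indicator (Set.Icc (a - δ) a) (fun _ => (1:ℝ)) t = δ := by
    rw [integral_indicator_const _ measurableSet_Icc, Real.volume_real_Icc_of_le (by linarith), smul_eq_mul, mul_one]
    ring
  linarith

lemma ftc_pointwise {A : ℝ} (h h' : ℝ → ℝ)
    (hderiv : ∀ t, HasDerivAt h (h' t) t) (hcont : Continuous h')
    {y : ℝ} (hy : y ∈ Set.Icc (-A) A) :
    h y - h (-A) = ∫ t in Set.Ioc (-A) A, (if t ≤ y then h' t else 0) := by
  obtain ⟨hy1, hy2⟩ := hy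
  have h1 : ∫ t in (-A)..y, h' t = h y - h (-A) :=
    intervalIntegral.integral_eq_sub_of_hasDerivAt (fun t _ => hderiv t)
      (hcont.intervalIntegrable _ _)
  rw [← h1, intervalIntegral.integral_of_le hy1]
  have : ∀ t, (if t ≤ y then h' t else 0) = Set.indicator (Set.Iic y) h' t := by
    intro t; simp [Set.indicator_apply]
  simp_rw [this]
  rw [setIntegral_indicator measurableSet_Iic]
  congr 1
  rw [Set.Ioc_inter_Iic, min_eq_right hy2]

lemma integral_repr {A : ℝ} (μ : Measure ℝ) [IsProbabilityMeasure μ]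
    (hμ : μ (Set.Icc (-A) A) = 1) (h h' : ℝ → ℝ)
    (hderiv : ∀ t, HasDerivAt h (h' t) t) (hcont : Continuous h')
    (hbd : ∀ t, |h' t| ≤ 1) :
    ∫ y, h y ∂μ = h (-A) + ∫ t in Set.Ioc (-A) A, h' t * (μ (Set.Ici t)).toReal := by
  set ν := volume.restrict (Set.Ioc (-A) A) with hν
  haveI : IsFiniteMeasure ν := ⟨by
    rw [hν, Measure.restrict_apply_univ, Real.volume_Ioc]; exact ENNReal.ofReal_lt_top⟩
  have haes : ∀ᵐ y ∂μ, y ∈ Set.Icc (-A) A := by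
    rw [ae_iff]
    have : {y | ¬y ∈ Set.Icc (-A) A} = (Set.Icc (-A) A)ᶜ := rfl
    rw [this, measure_compl measurableSet_Icc (measure_ne_top μ _), hμ, measure_univ]
    simp
  set f : ℝ → ℝ → ℝ := fun y t => if t ≤ y then h' t else 0 with hf
  have hmeas : Measurable (Function.uncurry f) := by
    have : Function.uncurry f = fun p : ℝ × ℝ => if p.2 ≤ p.1 then h' p.2 else 0 := rfl
    rw [this]
    exact Measurable.ite (measurableSet_le measurable_snd measurable_fst)
      (hcont.measurable.comp measurable_snd) measurable_const
  have hInt : Integrable (Function.uncurry f) (μ.prod ν) := by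
    refine Integrable.mono' (integrable_const 1) hmeas.aestronglyMeasurable ?_
    refine Filter.Eventually.of_forall fun p => ?_
    simp only [Function.uncurry, hf, Real.norm_eq_abs]
    split_ifs with hc
    · exact hbd _
    · simp
  have key1 : ∫ y, h y ∂μ = ∫ y, (h (-A) + ∫ t, f y t ∂ν) ∂μ := by
    refine integral_congr_ae ?_
    filter_upwards [haes] with y hy
    rw [← ftc_pointwise h h' hderiv hcont hy]
    ring
  have hIL : Integrable (fun y => ∫ t, f y t ∂ν) μ := hInt.integral_prod_left
  rw [key1, integral_add (integrable_const _) hIL,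
    integral_const, probReal_univ, one_smul]
  congr 1
  rw [integral_integral_swap hInt]
  refine integral_congr_ae (Filter.Eventually.of_forall fun t => ?_)
  have : ∀ y, f y t = Set.indicator (Set.Ici t) (fun _ => h' t) y := by
    intro y; simp [hf, Set.indicator_apply, Set.mem_Ici]
  simp_rw [this]
  rw [integral_indicator_const _ measurableSet_Ici, smul_eq_mul, mul_comm]; rfl

lemma key_diff {A δ : ℝ} (hA : 0 < A) (hδ : 0 < δ)
    (μ : Measure ℝ) [IsProbabilityMeasure μ] (hμ : μ (Set.Icc (-A) A) = 1)
    {n : ℕ} (hn : 1 ≤ n) (x : ℕ → ℝ) (hx : ∀ j, 1 ≤ j → j ≤ n → |x j| ≤ A)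
    (h h' : ℝ → ℝ) (hderiv : ∀ t, HasDerivAt h (h' t) t) (hcont : Continuous h')
    (hbd : ∀ t, |h' t| ≤ 1) :
    (1/(n:ℝ)) * ∑ j ∈ Finset.Icc 1 n, h (x j) - ∫ y, h y ∂μ ≤
      δ + ∫ t in Set.Icc (-A) A,
        |(1 / (n : ℝ)) * ∑ k ∈ Finset.Icc 1 n, gdelta δ (t - x k) -
          (μ (Set.Iic t)).toReal| := by
  have hνfin : volume (Set.Ioc (-A) A) ≠ ⊤ := by
    rw [Real.volume_Ioc]; exact ENNReal.ofReal_ne_top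
  set ν := volume.restrict (Set.Ioc (-A) A) with hνdef
  have hn' : (n:ℝ) ≠ 0 := Nat.cast_ne_zero.2 (by omega)
  set Sn : ℝ → ℝ := fun t => (1/(n:ℝ)) * ∑ j ∈ Finset.Icc 1 n, (if t ≤ x j then (1:ℝ) else 0) with hSn
  set Tn : ℝ → ℝ := fun t => (1/(n:ℝ)) * ∑ j ∈ Finset.Icc 1 n, (if x j < t then (1:ℝ) else 0) with hTn
  set Gn : ℝ → ℝ := fun t => (1/(n:ℝ)) * ∑ k ∈ Finset.Icc 1 n, gdelta δ (t - x k) with hGn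
  set F : ℝ → ℝ := fun t => (μ (Set.Iic t)).toReal with hF
  set Fm : ℝ → ℝ := fun t => (μ (Set.Iio t)).toReal with hFm
  set M : ℝ → ℝ := fun t => (μ (Set.Ici t)).toReal with hM
  -- measurability
  have hSn_meas : Measurable Sn := by
    refine Measurable.const_mul (Finset.measurable_sum _ fun j _ => ?_) _
    exact Measurable.ite (measurableSet_le measurable_id measurable_const)
      measurable_const measurable_const
  have hTn_meas : Measurable Tn := by
    refine Measurable.const_mul (Finset.measurable_sum _ fun j _ => ?_) _
    exact Measurable.ite (measurableSet_lt measurable_const measurable_id)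
      measurable_const measurable_const
  have hGn_meas : Measurable Gn := by
    refine Measurable.const_mul (Finset.measurable_sum _ fun j _ => ?_) _
    exact (measurable_gdelta δ).comp (measurable_id.sub measurable_const)
  have hF_meas : Measurable F := by
    refine Monotone.measurable fun a b hab => ?_
    exact ENNReal.toReal_mono (measure_ne_top μ _) (measure_mono (Set.Iic_subset_Iic.2 hab))
  have hM_meas : Measurable M := by
    refine Antitone.measurable fun a b hab => ?_
    exact ENNReal.toReal_mono (measure_ne_top μ _) (measure_mono (Set.Ici_subset_Ici.2 hab))
  -- bounds
  have habs_ind : ∀ (c : Prop) [Decidable c], |(if c then (1:ℝ) else 0)| ≤ 1 := by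
    intro c _; split_ifs <;> simp
  have havg : ∀ (f : ℕ → ℝ), (∀ j, |f j| ≤ 1) → ∀ t : ℝ,
      |(1/(n:ℝ)) * ∑ j ∈ Finset.Icc 1 n, f j| ≤ 1 := by
    intro f hf t
    rw [abs_mul]
    have h1 : |∑ j ∈ Finset.Icc 1 n, f j| ≤ (n:ℝ) := by
      refine (Finset.abs_sum_le_sum_abs _ _).trans ?_
      calc ∑ j ∈ Finset.Icc 1 n, |f j| ≤ ∑ j ∈ Finset.Icc 1 n, 1 :=
            Finset.sum_le_sum fun j _ => hf j
        _ = (n:ℝ) := by simp [Nat.card_Icc]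
    have h2 : |1/(n:ℝ)| = 1/(n:ℝ) := abs_of_pos (by positivity)
    rw [h2]
    rw [div_mul_eq_mul_div, one_mul, div_le_one (by positivity)]
    exact h1
  have hSn_bd : ∀ t, |Sn t| ≤ 1 := fun t => havg _ (fun j => habs_ind _) t
  have hTn_bd : ∀ t, |Tn t| ≤ 1 := fun t => havg _ (fun j => habs_ind _) t
  have hGn_bd : ∀ t, |Gn t| ≤ 1 := fun t => havg _ (fun j => abs_le.2
    ⟨by linarith [gdelta_nonneg hδ (t - x j)], gdelta_le_one hδ (t - x j)⟩) t
  have hF_bd : ∀ t, |F t| ≤ 1 := fun t => by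
    rw [abs_of_nonneg ENNReal.toReal_nonneg]
    exact ENNReal.toReal_le_of_le_ofReal zero_le_one (by simpa using prob_le_one)
  have hM_bd : ∀ t, |M t| ≤ 1 := fun t => by
    rw [abs_of_nonneg ENNReal.toReal_nonneg]
    exact ENNReal.toReal_le_of_le_ofReal zero_le_one (by simpa using prob_le_one)
  -- integrability over ν
  have hintSM : Integrable (fun t => h' t * (Sn t - M t)) ν := by
    refine integrable_restrict_of_bounded hνfin ?_ (C := 2) ?_
    · exact ((hcont.measurable.mul (hSn_meas.sub hM_meas))).aestronglyMeasurable
    · intro t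
      rw [abs_mul]
      calc |h' t| * |Sn t - M t| ≤ 1 * 2 := by
            refine mul_le_mul (hbd t) ?_ (abs_nonneg _) zero_le_one
            calc |Sn t - M t| ≤ |Sn t| + |M t| := abs_sub _ _
              _ ≤ 2 := by linarith [hSn_bd t, hM_bd t]
        _ = 2 := by norm_num
  have hintFTn : Integrable (fun t => |F t - Tn t|) ν := by
    refine integrable_restrict_of_bounded hνfin ?_ (C := 2) ?_
    · exact ((hF_meas.sub hTn_meas)).abs.aestronglyMeasurable
    · intro t
      rw [abs_abs]
      calc |F t - Tn t| ≤ |F t| + |Tn t| := abs_sub _ _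
        _ ≤ 2 := by linarith [hF_bd t, hTn_bd t]
  have hintGF : Integrable (fun t => |Gn t - F t|) ν := by
    refine integrable_restrict_of_bounded hνfin ?_ (C := 2) ?_
    · exact ((hGn_meas.sub hF_meas)).abs.aestronglyMeasurable
    · intro t
      rw [abs_abs]
      calc |Gn t - F t| ≤ |Gn t| + |F t| := abs_sub _ _
        _ ≤ 2 := by linarith [hF_bd t, hGn_bd t]
  have hintTG : Integrable (fun t => |Tn t - Gn t|) ν := by
    refine integrable_restrict_of_bounded hνfin ?_ (C := 2) ?_
    · exact ((hTn_meas.sub hGn_meas)).abs.aestronglyMeasurable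
    · intro t
      rw [abs_abs]
      calc |Tn t - Gn t| ≤ |Tn t| + |Gn t| := abs_sub _ _
        _ ≤ 2 := by linarith [hTn_bd t, hGn_bd t]
  -- Step A: empirical representation
  have hxIcc : ∀ j ∈ Finset.Icc 1 n, x j ∈ Set.Icc (-A) A := by
    intro j hj
    rw [Finset.mem_Icc] at hj
    have := hx j hj.1 hj.2
    rw [abs_le] at this
    exact Set.mem_Icc.2 this
  have hstepA : (1/(n:ℝ)) * ∑ j ∈ Finset.Icc 1 n, h (x j) =
      h (-A) + ∫ t, h' t * Sn t ∂ν := by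
    have hrepr : ∀ j ∈ Finset.Icc 1 n,
        h (x j) = h (-A) + ∫ t, (if t ≤ x j then h' t else 0) ∂ν := by
      intro j hj
      have := ftc_pointwise h h' hderiv hcont (hxIcc j hj)
      linarith
    rw [Finset.sum_congr rfl hrepr, Finset.sum_add_distrib, Finset.sum_const, Nat.card_Icc]
    have hintj : ∀ j ∈ Finset.Icc 1 n,
        Integrable (fun t => if t ≤ x j then h' t else 0) ν := by
      intro j _
      refine integrable_restrict_of_bounded hνfin ?_ (C := 1) ?_
      · exact (Measurable.ite (measurableSet_le measurable_id measurable_const)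
          hcont.measurable measurable_const).aestronglyMeasurable
      · intro t; split_ifs; exacts [hbd t, by simp]
    rw [← integral_finset_sum _ hintj]
    have heq : ∀ t, (∑ j ∈ Finset.Icc 1 n, if t ≤ x j then h' t else 0) =
        (n:ℝ) * (h' t * Sn t) := by
      intro t
      have : ∀ j, (if t ≤ x j then h' t else 0) = h' t * (if t ≤ x j then (1:ℝ) else 0) := by
        intro j; split_ifs <;> ring
      simp_rw [this, ← Finset.mul_sum, hSn]
      field_simp
    simp_rw [heq]
    rw [MeasureTheory.integral_const_mul]
    rw [nsmul_eq_mul]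
    have hc : ((n + 1 - 1 : ℕ) : ℝ) = (n:ℝ) := by
      have : n + 1 - 1 = n := by omega
      rw [this]
    rw [hc]
    field_simp
  -- Step B
  have hstepB : ∫ y, h y ∂μ = h (-A) + ∫ t, h' t * M t ∂ν :=
    integral_repr μ hμ h h' hderiv hcont hbd
  -- Step C
  have hstepC : (1/(n:ℝ)) * ∑ j ∈ Finset.Icc 1 n, h (x j) - ∫ y, h y ∂μ =
      ∫ t, h' t * (Sn t - M t) ∂ν := by
    rw [hstepA, hstepB]
    have e1 : ∀ t, h' t * (Sn t - M t) = h' t * Sn t - h' t * M t := fun t => by ring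
    simp_rw [e1]
    rw [integral_sub]
    · ring
    · refine integrable_restrict_of_bounded hνfin ?_ (C := 1) ?_
      · exact (hcont.measurable.mul hSn_meas).aestronglyMeasurable
      · intro t; rw [abs_mul]
        calc |h' t| * |Sn t| ≤ 1 * 1 := mul_le_mul (hbd t) (hSn_bd t) (abs_nonneg _) zero_le_one
          _ = 1 := by norm_num
    · refine integrable_restrict_of_bounded hνfin ?_ (C := 1) ?_
      · exact (hcont.measurable.mul hM_meas).aestronglyMeasurable
      · intro t; rw [abs_mul]
        calc |h' t| * |M t| ≤ 1 * 1 := mul_le_mul (hbd t) (hM_bd t) (abs_nonneg _) zero_le_one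
          _ = 1 := by norm_num
  -- Step D: a.e. rewrite
  have hae : ∀ᵐ t ∂ν, h' t * (Sn t - M t) = h' t * (F t - Tn t) := by
    have h0 : ∀ᵐ t : ℝ ∂ν, μ {t} = 0 := ae_restrict_of_ae (ae_no_atoms μ)
    filter_upwards [h0] with t ht
    have hSnT : Sn t = 1 - Tn t := by
      have he : ∀ j, (if t ≤ x j then (1:ℝ) else 0) = 1 - (if x j < t then (1:ℝ) else 0) := by
        intro j
        by_cases hc : t ≤ x j
        · rw [if_pos hc, if_neg (not_lt.2 hc)]; ring
        · rw [if_neg hc, if_pos (lt_of_not_ge hc)]; ring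
      rw [hSn]
      simp only [he]
      rw [Finset.sum_sub_distrib, Finset.sum_const, Nat.card_Icc, nsmul_eq_mul]
      have hc2 : ((n + 1 - 1 : ℕ) : ℝ) = (n:ℝ) := by
        have : n + 1 - 1 = n := by omega
        rw [this]
      rw [hc2, hTn]
      field_simp
    have hMF : M t = 1 - F t := by
      have h1 : μ (Set.Iic t) = μ (Set.Iio t) := by
        rw [← Set.Iio_union_right, measure_union (by simp) (measurableSet_singleton t),
          ht, add_zero]
      have h2 : μ (Set.Iio t) + μ (Set.Ici t) = 1 := by
        rw [← Set.compl_Iio, measure_add_measure_compl measurableSet_Iio, measure_univ]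
      have h3 : μ (Set.Ici t) + μ (Set.Iic t) = 1 := by rw [h1, add_comm]; exact h2
      have h4 := congrArg ENNReal.toReal h3
      rw [ENNReal.toReal_add (measure_ne_top μ _) (measure_ne_top μ _), ENNReal.toReal_one] at h4
      rw [hM, hF]
      dsimp only
      linarith
    rw [hSnT, hMF]
    ring
  -- Step E
  have hintFT' : Integrable (fun t => h' t * (F t - Tn t)) ν := by
    refine integrable_restrict_of_bounded hνfin ?_ (C := 2) ?_
    · exact (hcont.measurable.mul (hF_meas.sub hTn_meas)).aestronglyMeasurable
    · intro t
      rw [abs_mul]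
      calc |h' t| * |F t - Tn t| ≤ 1 * 2 := by
            refine mul_le_mul (hbd t) ?_ (abs_nonneg _) zero_le_one
            calc |F t - Tn t| ≤ |F t| + |Tn t| := abs_sub _ _
              _ ≤ 2 := by linarith [hF_bd t, hTn_bd t]
        _ = 2 := by norm_num
  have hstepE : ∫ t, h' t * (Sn t - M t) ∂ν ≤ ∫ t, |F t - Tn t| ∂ν := by
    rw [integral_congr_ae hae]
    refine integral_mono hintFT' hintFTn fun t => ?_
    calc h' t * (F t - Tn t) ≤ |h' t * (F t - Tn t)| := le_abs_self _
      _ = |h' t| * |F t - Tn t| := abs_mul _ _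
      _ ≤ 1 * |F t - Tn t| := mul_le_mul_of_nonneg_right (hbd t) (abs_nonneg _)
      _ = |F t - Tn t| := one_mul _
  -- Step F
  have hstepF : ∫ t, |F t - Tn t| ∂ν ≤ ∫ t, |Gn t - F t| ∂ν + ∫ t, |Tn t - Gn t| ∂ν := by
    rw [← integral_add hintGF hintTG]
    refine integral_mono hintFTn (hintGF.add hintTG) fun t => ?_
    have he : F t - Tn t = -(Gn t - F t) + -(Tn t - Gn t) := by ring
    rw [he]
    refine (abs_add_le _ _).trans ?_
    rw [abs_neg, abs_neg]
  -- Step G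
  have hstepG : ∫ t, |Tn t - Gn t| ∂ν ≤ δ := by
    have hintj : ∀ j ∈ Finset.Icc 1 n,
        Integrable (fun t => |(if x j < t then (1:ℝ) else 0) - gdelta δ (t - x j)|) ν := by
      intro j _
      refine integrable_restrict_of_bounded hνfin ?_ (C := 2) ?_
      · exact ((Measurable.ite (measurableSet_lt measurable_const measurable_id)
          measurable_const measurable_const).sub
          ((measurable_gdelta δ).comp (measurable_id.sub measurable_const))).abs.aestronglyMeasurable
      · intro t
        rw [abs_abs]
        have g1 := gdelta_nonneg hδ (t - x j)
        have g2 := gdelta_le_one hδ (t - x j)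
        rw [abs_le]; split_ifs <;> constructor <;> linarith
    have hpt : ∀ t, |Tn t - Gn t| ≤
        (1/(n:ℝ)) * ∑ j ∈ Finset.Icc 1 n,
          |(if x j < t then (1:ℝ) else 0) - gdelta δ (t - x j)| := by
      intro t
      have he : Tn t - Gn t = (1/(n:ℝ)) * ∑ j ∈ Finset.Icc 1 n,
          ((if x j < t then (1:ℝ) else 0) - gdelta δ (t - x j)) := by
        rw [hTn, hGn]
        dsimp only
        rw [Finset.sum_sub_distrib]
        ring
      rw [he, abs_mul, abs_of_pos (by positivity : (0:ℝ) < 1/(n:ℝ))]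
      exact mul_le_mul_of_nonneg_left (Finset.abs_sum_le_sum_abs _ _) (by positivity)
    calc ∫ t, |Tn t - Gn t| ∂ν ≤
        ∫ t, (1/(n:ℝ)) * ∑ j ∈ Finset.Icc 1 n,
          |(if x j < t then (1:ℝ) else 0) - gdelta δ (t - x j)| ∂ν := by
          refine integral_mono hintTG ?_ hpt
          refine Integrable.const_mul (integrable_finset_sum _ hintj) _
      _ = (1/(n:ℝ)) * ∑ j ∈ Finset.Icc 1 n,
          ∫ t, |(if x j < t then (1:ℝ) else 0) - gdelta δ (t - x j)| ∂ν := by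
          rw [MeasureTheory.integral_const_mul, integral_finset_sum _ hintj]
      _ ≤ (1/(n:ℝ)) * ∑ j ∈ Finset.Icc 1 n, δ := by
          refine mul_le_mul_of_nonneg_left ?_ (by positivity)
          exact Finset.sum_le_sum fun j _ => heaviside_gdelta_integral hδ (x j)
      _ = δ := by
          rw [Finset.sum_const, Nat.card_Icc, nsmul_eq_mul]
          have hc2 : ((n + 1 - 1 : ℕ) : ℝ) = (n:ℝ) := by
            have : n + 1 - 1 = n := by omega
            rw [this]
          rw [hc2]
          field_simp
  -- Step H
  have hstepH : ∫ t, |Gn t - F t| ∂ν =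
      ∫ t in Set.Icc (-A) A, |Gn t - F t| := by
    rw [hνdef, ← integral_Icc_eq_integral_Ioc]
  calc (1/(n:ℝ)) * ∑ j ∈ Finset.Icc 1 n, h (x j) - ∫ y, h y ∂μ
      = ∫ t, h' t * (Sn t - M t) ∂ν := hstepC
    _ ≤ ∫ t, |F t - Tn t| ∂ν := hstepE
    _ ≤ ∫ t, |Gn t - F t| ∂ν + ∫ t, |Tn t - Gn t| ∂ν := hstepF
    _ ≤ (∫ t in Set.Icc (-A) A, |Gn t - F t|) + δ := by rw [← hstepH]; linarith
    _ = δ + ∫ t in Set.Icc (-A) A,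
        |(1 / (n : ℝ)) * ∑ k ∈ Finset.Icc 1 n, gdelta δ (t - x k) -
          (μ (Set.Iic t)).toReal| := by rw [hGn, hF]; ring

theorem kantorovich_empirical_gdelta_bound
    (A : ℝ) (hA : 0 < A) (δ : ℝ) (hδ : 0 < δ)
    (μ : Measure ℝ) [IsProbabilityMeasure μ] (hμ : μ (Set.Icc (-A) A) = 1)
    (n : ℕ) (hn : 1 ≤ n) (x : ℕ → ℝ) (hx : ∀ j, 1 ≤ j → j ≤ n → |x j| ≤ A) :
    kantorovichR (empiricalMeasureR n x) μ ≤
      δ + ∫ t in Set.Icc (-A) A,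
        |(1 / (n : ℝ)) * ∑ k ∈ Finset.Icc 1 n, gdelta δ (t - x k) -
          (μ (Set.Iic t)).toReal| := by
  haveI : Nonempty {g : ℝ → ℝ // LipschitzWith 1 g} :=
    ⟨⟨fun _ => 0, (LipschitzWith.const 0).weaken zero_le_one⟩⟩
  set I := ∫ t in Set.Icc (-A) A,
        |(1 / (n : ℝ)) * ∑ k ∈ Finset.Icc 1 n, gdelta δ (t - x k) -
          (μ (Set.Iic t)).toReal| with hIdef
  rw [kantorovichR]
  refine ciSup_le fun gp => ?_
  obtain ⟨g, hg⟩ := gp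
  dsimp only
  have hgc : Continuous g := hg.continuous
  have hμae : ∀ᵐ y ∂μ, y ∈ Set.Icc (-A) A := by
    rw [ae_iff]
    have h1 : {y | ¬y ∈ Set.Icc (-A) A} = (Set.Icc (-A) A)ᶜ := rfl
    rw [h1, measure_compl measurableSet_Icc (measure_ne_top μ _), hμ, measure_univ]
    simp
  have hgint : Integrable g μ := by
    refine Integrable.mono' (integrable_const (|g 0| + A)) hgc.aestronglyMeasurable ?_
    filter_upwards [hμae] with y hy
    rw [Real.norm_eq_abs]
    have h1 : |g y - g 0| ≤ |y| := by
      have := hg.dist_le_mul y 0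
      rw [Real.dist_eq, Real.dist_eq, sub_zero] at this
      simpa using this
    have h2 : |y| ≤ A := abs_le.2 ⟨hy.1, hy.2⟩
    calc |g y| ≤ |g y - g 0| + |g 0| := by
          have := abs_add_le (g y - g 0) (g 0); simpa using this
      _ ≤ |g 0| + A := by linarith
  have hgemp : ∫ y, g y ∂(empiricalMeasureR n x) = (1/(n:ℝ)) * ∑ j ∈ Finset.Icc 1 n, g (x j) :=
    integral_empirical hn x hgc.stronglyMeasurable
  refine le_of_forall_pos_le_add fun ε hε => ?_
  set η := ε/2 with hηdef
  have hη : 0 < η := by positivity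
  set H : ℝ → ℝ := fun u => ∫ v in (0:ℝ)..u, g v with hHdef
  set h : ℝ → ℝ := fun u => η⁻¹ * (H (u + η) - H u) with hhdef
  set h' : ℝ → ℝ := fun u => η⁻¹ * (g (u + η) - g u) with hh'def
  have hderiv : ∀ t, HasDerivAt h (h' t) t := by
    intro t
    have d1 : HasDerivAt H (g t) t := (hgc.integral_hasStrictDerivAt 0 t).hasDerivAt
    have d0 : HasDerivAt H (g (t + η)) (t + η) :=
      (hgc.integral_hasStrictDerivAt 0 (t + η)).hasDerivAt
    have d2 : HasDerivAt (fun u => H (u + η)) (g (t + η)) t := by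
      have := HasDerivAt.comp t d0 ((hasDerivAt_id t).add_const η)
      rw [mul_one] at this
      exact this
    simpa [hhdef, hh'def] using ((d2.sub d1).const_mul η⁻¹)
  have hbd' : ∀ t, |h' t| ≤ 1 := by
    intro t
    rw [hh'def]
    dsimp only
    rw [abs_mul, abs_of_pos (by positivity : (0:ℝ) < η⁻¹)]
    have h1 : |g (t + η) - g t| ≤ η := by
      have := hg.dist_le_mul (t + η) t
      rw [Real.dist_eq, Real.dist_eq] at this
      have h2 : |g (t + η) - g t| ≤ |η| := by simpa using this
      rwa [abs_of_pos hη] at h2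
    calc η⁻¹ * |g (t + η) - g t| ≤ η⁻¹ * η :=
          mul_le_mul_of_nonneg_left h1 (by positivity)
      _ = 1 := inv_mul_cancel₀ hη.ne'
  have hcont' : Continuous h' :=
    continuous_const.mul ((hgc.comp (continuous_id.add continuous_const)).sub hgc)
  have happrox : ∀ t, |h t - g t| ≤ η := by
    intro t
    have hH1 : H (t + η) - H t = ∫ v in t..(t+η), g v :=
      (intervalIntegral.integral_interval_sub_left (hgc.intervalIntegrable _ _)
        (hgc.intervalIntegrable _ _))
    have hH2 : ∫ v in t..(t+η), (g v - g t) = (∫ v in t..(t+η), g v) - η * g t := by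
      rw [intervalIntegral.integral_sub (hgc.intervalIntegrable _ _) intervalIntegrable_const,
        intervalIntegral.integral_const, smul_eq_mul]
      ring_nf
    have hbound : |∫ v in t..(t+η), (g v - g t)| ≤ η * η := by
      have := intervalIntegral.norm_integral_le_of_norm_le_const
        (C := η) (f := fun v => g v - g t) (a := t) (b := t + η) ?_
      · rw [Real.norm_eq_abs] at this
        refine this.trans ?_
        have : |t + η - t| = η := by rw [add_sub_cancel_left, abs_of_pos hη]
        rw [this, mul_comm]
      · intro v hv
        rw [Set.uIoc_of_le (by linarith : t ≤ t + η)] at hv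
        rw [Real.norm_eq_abs]
        have h1 : |g v - g t| ≤ |v - t| := by
          have := hg.dist_le_mul v t
          rw [Real.dist_eq, Real.dist_eq] at this
          simpa using this
        refine h1.trans ?_
        rw [abs_of_pos (by linarith [hv.1] : (0:ℝ) < v - t)]
        linarith [hv.2]
    have he : h t - g t = η⁻¹ * (∫ v in t..(t+η), (g v - g t)) := by
      rw [hhdef]
      dsimp only
      rw [hH1, hH2]
      field_simp
    rw [he, abs_mul, abs_of_pos (by positivity : (0:ℝ) < η⁻¹)]
    calc η⁻¹ * |∫ v in t..(t+η), (g v - g t)| ≤ η⁻¹ * (η * η) :=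
          mul_le_mul_of_nonneg_left hbound (by positivity)
      _ = η := by field_simp
  have hhc : Continuous h := continuous_iff_continuousAt.2 fun t => (hderiv t).continuousAt
  have hhint : Integrable h μ := by
    refine Integrable.mono' (integrable_const (|g 0| + A + η)) hhc.aestronglyMeasurable ?_
    filter_upwards [hμae] with y hy
    rw [Real.norm_eq_abs]
    have h1 : |g y - g 0| ≤ |y| := by
      have := hg.dist_le_mul y 0
      rw [Real.dist_eq, Real.dist_eq, sub_zero] at this
      simpa using this
    have h2 : |y| ≤ A := abs_le.2 ⟨hy.1, hy.2⟩
    have h3 := happrox y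
    have h4 : |g y| ≤ |g 0| + A := by
      calc |g y| ≤ |g y - g 0| + |g 0| := by
            have := abs_add_le (g y - g 0) (g 0); simpa using this
        _ ≤ |g 0| + A := by linarith
    calc |h y| ≤ |h y - g y| + |g y| := by
          have := abs_add_le (h y - g y) (g y); simpa using this
      _ ≤ |g 0| + A + η := by linarith
  have hkey := key_diff hA hδ μ hμ hn x hx h h' hderiv hcont' hbd'
  rw [← hIdef] at hkey
  have hhemp : ∫ y, h y ∂(empiricalMeasureR n x) = (1/(n:ℝ)) * ∑ j ∈ Finset.Icc 1 n, h (x j) :=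
    integral_empirical hn x hhc.stronglyMeasurable
  -- empirical difference
  have e1 : |(1/(n:ℝ)) * ∑ j ∈ Finset.Icc 1 n, g (x j)
      - (1/(n:ℝ)) * ∑ j ∈ Finset.Icc 1 n, h (x j)| ≤ η := by
    have he : (1/(n:ℝ)) * ∑ j ∈ Finset.Icc 1 n, g (x j)
        - (1/(n:ℝ)) * ∑ j ∈ Finset.Icc 1 n, h (x j)
        = (1/(n:ℝ)) * ∑ j ∈ Finset.Icc 1 n, (g (x j) - h (x j)) := by
      rw [Finset.sum_sub_distrib]; ring
    have hn0 : (0:ℝ) < (n:ℝ) := by positivity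
    rw [he, abs_mul, abs_of_pos (by positivity : (0:ℝ) < 1/(n:ℝ))]
    have hsum : |∑ j ∈ Finset.Icc 1 n, (g (x j) - h (x j))| ≤ (n:ℝ) * η := by
      refine (Finset.abs_sum_le_sum_abs _ _).trans ?_
      calc ∑ j ∈ Finset.Icc 1 n, |g (x j) - h (x j)| ≤ ∑ j ∈ Finset.Icc 1 n, η := by
            refine Finset.sum_le_sum fun j _ => ?_
            rw [abs_sub_comm]; exact happrox (x j)
        _ = (n:ℝ) * η := by
            rw [Finset.sum_const, Nat.card_Icc, nsmul_eq_mul]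
            have : n + 1 - 1 = n := by omega
            rw [this]
    calc 1/(n:ℝ) * |∑ j ∈ Finset.Icc 1 n, (g (x j) - h (x j))| ≤ 1/(n:ℝ) * ((n:ℝ) * η) :=
          mul_le_mul_of_nonneg_left hsum (by positivity)
      _ = η := by field_simp
  -- μ difference
  have e2 : |∫ y, g y ∂μ - ∫ y, h y ∂μ| ≤ η := by
    rw [← integral_sub hgint hhint]
    have := norm_integral_le_of_norm_le (μ := μ) (f := fun y => g y - h y)
      (integrable_const η) (Filter.Eventually.of_forall fun y => by
        rw [Real.norm_eq_abs, abs_sub_comm]; exact happrox y)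
    rw [Real.norm_eq_abs] at this
    refine this.trans ?_
    rw [integral_const, probReal_univ, one_smul]
  have a1 := (abs_le.1 e1).2
  have a2 := (abs_le.1 e2).2
  have a2' := (abs_le.1 e2).1
  rw [hgemp]
  have : ε = η + η := by rw [hηdef]; ring
  linarith [hkey]
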